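/- Let ρ̃, ρ : [t₀,t₁] × ℝⁿ → (0,∞) be smooth strictly positive probability densities solving the steepest-descent system ∂ρ̃/∂t = ∇·( ρ̃ ∇log(ρ̃/ρ) ), ∂ρ/∂t = −∇·( ρ ∇(ρ̃/ρ) ). Assume t ↦ D(ρ̃_t‖ρ_t) is differentiable with derivative obtained by differentiating under the integral sign, and that the required boundary terms at infinity vanish (∫ ∇·( (1 + log(ρ̃_t/ρ_t)) ρ̃_t ∇log(ρ̃_t/ρ_t) ) dx = 0 and ∫ ∇·( (ρ̃_t/ρ_t) ρ_t ∇(ρ̃_t/ρ_t) ) dx = 0 for each t). Then (d/dt) D(ρ̃_t‖ρ_t) = −∫_{ℝⁿ} ( 1 + ρ̃_t(x)/ρ_t(x) ) ‖∇log(ρ̃_t(x)/ρ_t(x))‖² ρ̃_t(x) dx ≤ 0. -/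

import Mathlib

open MeasureTheory Real

/-- Divergence of a vector field on `ℝⁿ`: `(∇·w)(x) = ∑ᵢ ∂wⁱ/∂xⁱ (x)`. -/
noncomputable def vdiv {n : ℕ} (w : EuclideanSpace ℝ (Fin n) → EuclideanSpace ℝ (Fin n))
    (x : EuclideanSpace ℝ (Fin n)) : ℝ :=
  ∑ i, fderiv ℝ w x (EuclideanSpace.single i 1) i


lemma fderiv_apply_eq_inner_gradient {n : ℕ} (c : EuclideanSpace ℝ (Fin n) → ℝ)
    (x v : EuclideanSpace ℝ (Fin n)) :
    fderiv ℝ c x v = inner ℝ (gradient c x) v := by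
  rw [gradient, InnerProductSpace.toDual_symm_apply]

lemma vdiv_smul {n : ℕ} (c : EuclideanSpace ℝ (Fin n) → ℝ)
    (w : EuclideanSpace ℝ (Fin n) → EuclideanSpace ℝ (Fin n))
    (x : EuclideanSpace ℝ (Fin n)) (hc : DifferentiableAt ℝ c x)
    (hw : DifferentiableAt ℝ w x) :
    vdiv (fun y => c y • w y) x
      = inner ℝ (gradient c x) (w x) + c x * vdiv w x := by
  unfold vdiv
  rw [fderiv_fun_smul hc hw]
  have h1 : ∀ i : Fin n,
      ((c x • fderiv ℝ w x + (fderiv ℝ c x).smulRight (w x)) (EuclideanSpace.single i 1)) i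
      = c x * (fderiv ℝ w x (EuclideanSpace.single i 1)) i
        + fderiv ℝ c x (EuclideanSpace.single i 1) * (w x) i := by
    intro i
    simp [ContinuousLinearMap.smulRight_apply, mul_comm]
  rw [Finset.sum_congr rfl (fun i _ => h1 i), Finset.sum_add_distrib, ← Finset.mul_sum]
  have h2 : ∑ i, fderiv ℝ c x (EuclideanSpace.single i 1) * (w x) i
      = fderiv ℝ c x (w x) := by
    have hrepr : (w x) = ∑ i, (w x) i • EuclideanSpace.single i 1 := by
      have := (EuclideanSpace.basisFun (Fin n) ℝ).sum_repr (w x)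
      simp only [EuclideanSpace.basisFun_repr, EuclideanSpace.basisFun_apply] at this
      exact this.symm
    conv_rhs => rw [hrepr]
    rw [map_sum]
    simp [mul_comm]
  rw [h2, fderiv_apply_eq_inner_gradient]
  ring

lemma gradient_log_comp {n : ℕ} (g : EuclideanSpace ℝ (Fin n) → ℝ)
    (x : EuclideanSpace ℝ (Fin n)) (hg : DifferentiableAt ℝ g x) (hgx : g x ≠ 0) :
    gradient (fun y => Real.log (g y)) x = (g x)⁻¹ • gradient g x := by
  rw [gradient, gradient, (hg.hasFDerivAt.log hgx).fderiv, _root_.map_smul]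

lemma gradient_one_add {n : ℕ} (f : EuclideanSpace ℝ (Fin n) → ℝ)
    (x : EuclideanSpace ℝ (Fin n)) :
    gradient (fun y => 1 + f y) x = gradient f x := by
  rw [gradient, gradient, fderiv_const_add]

lemma contDiff_gradient {n : ℕ} {f : EuclideanSpace ℝ (Fin n) → ℝ} (hf : ContDiff ℝ (⊤ : ℕ∞) f) :
    ContDiff ℝ (⊤ : ℕ∞) (fun x => gradient f x) :=
  ((InnerProductSpace.toDual ℝ (EuclideanSpace ℝ (Fin n))).symm.contDiff).comp
    (hf.fderiv_right (by simp))

/-- Let `ρt, ρ` be smooth strictly positive probability densities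
solving the steepest-descent system `∂ρt/∂t = ∇·(ρt ∇log(ρt/ρ))`,
`∂ρ/∂t = -∇·(ρ ∇(ρt/ρ))` on `[t₀,t₁]`.  Under differentiation under the integral sign and
vanishing of the boundary terms at infinity,
`(d/dt) D(ρt_t‖ρ_t) = -∫ (1 + ρt/ρ) ‖∇log(ρt/ρ)‖² ρt dx ≤ 0`. -/
theorem relEntropy_dissipation_product_space {n : ℕ} (t₀ t₁ : ℝ) (ht : t₀ < t₁)
    (ρt ρ : ℝ → EuclideanSpace ℝ (Fin n) → ℝ)
    (hρts : ContDiff ℝ (⊤ : ℕ∞) (fun p : ℝ × EuclideanSpace ℝ (Fin n) => ρt p.1 p.2))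
    (hρs : ContDiff ℝ (⊤ : ℕ∞) (fun p : ℝ × EuclideanSpace ℝ (Fin n) => ρ p.1 p.2))
    (hρtpos : ∀ t x, 0 < ρt t x) (hρpos : ∀ t x, 0 < ρ t x)
    (hρt1 : ∀ t, ∫ x, ρt t x = 1) (hρ1 : ∀ t, ∫ x, ρ t x = 1)
    (heq₁ : ∀ t ∈ Set.Icc t₀ t₁, ∀ x,
      deriv (fun s => ρt s x) t
        = vdiv (fun y => ρt t y • gradient (fun z => Real.log (ρt t z / ρ t z)) y) x)
    (heq₂ : ∀ t ∈ Set.Icc t₀ t₁, ∀ x,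
      deriv (fun s => ρ s x) t
        = -vdiv (fun y => ρ t y • gradient (fun z => ρt t z / ρ t z) y) x)
    (hDUI : ∀ t ∈ Set.Icc t₀ t₁,
      HasDerivAt (fun s => ∫ x, ρt s x * Real.log (ρt s x / ρ s x))
        (∫ x, (deriv (fun s => ρt s x) t * (1 + Real.log (ρt t x / ρ t x))
          - deriv (fun s => ρ s x) t * (ρt t x / ρ t x))) t)
    (hbdry₁ : ∀ t ∈ Set.Icc t₀ t₁,
      (Integrable (fun x => vdiv (fun y => (1 + Real.log (ρt t y / ρ t y)) •
          (ρt t y • gradient (fun z => Real.log (ρt t z / ρ t z)) y)) x))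
        ∧ ∫ x, vdiv (fun y => (1 + Real.log (ρt t y / ρ t y)) •
            (ρt t y • gradient (fun z => Real.log (ρt t z / ρ t z)) y)) x = 0)
    (hbdry₂ : ∀ t ∈ Set.Icc t₀ t₁,
      (Integrable (fun x => vdiv (fun y => (ρt t y / ρ t y) •
          (ρ t y • gradient (fun z => ρt t z / ρ t z) y)) x))
        ∧ ∫ x, vdiv (fun y => (ρt t y / ρ t y) •
            (ρ t y • gradient (fun z => ρt t z / ρ t z) y)) x = 0) :
    ∀ t ∈ Set.Icc t₀ t₁,
      HasDerivAt (fun s => ∫ x, ρt s x * Real.log (ρt s x / ρ s x))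
        (-∫ x, (1 + ρt t x / ρ t x)
          * ‖gradient (fun y => Real.log (ρt t y / ρ t y)) x‖ ^ 2 * ρt t x) t
      ∧ (-∫ x, (1 + ρt t x / ρ t x)
          * ‖gradient (fun y => Real.log (ρt t y / ρ t y)) x‖ ^ 2 * ρt t x) ≤ 0 := by
  intro t htm
  have hA : ContDiff ℝ (⊤ : ℕ∞) (fun x => ρt t x) := hρts.comp (contDiff_const.prodMk contDiff_id)
  have hB : ContDiff ℝ (⊤ : ℕ∞) (fun x => ρ t x) := hρs.comp (contDiff_const.prodMk contDiff_id)
  have hBne : ∀ x, ρ t x ≠ 0 := fun x => (hρpos t x).ne'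
  have hgpos : ∀ x, 0 < ρt t x / ρ t x := fun x => div_pos (hρtpos t x) (hρpos t x)
  have hg : ContDiff ℝ (⊤ : ℕ∞) (fun x => ρt t x / ρ t x) := hA.div hB hBne
  have hf : ContDiff ℝ (⊤ : ℕ∞) (fun x => Real.log (ρt t x / ρ t x)) :=
    hg.log (fun x => (hgpos x).ne')
  have hgradf := contDiff_gradient hf
  have hgradg := contDiff_gradient hg
  have hw1 : ContDiff ℝ (⊤ : ℕ∞)
      (fun y => ρt t y • gradient (fun z => Real.log (ρt t z / ρ t z)) y) :=
    hA.smul hgradf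
  have hw2 : ContDiff ℝ (⊤ : ℕ∞) (fun y => ρ t y • gradient (fun z => ρt t z / ρ t z) y) :=
    hB.smul hgradg
  have key : ∀ x, deriv (fun s => ρt s x) t * (1 + Real.log (ρt t x / ρ t x))
      - deriv (fun s => ρ s x) t * (ρt t x / ρ t x)
      = vdiv (fun y => (1 + Real.log (ρt t y / ρ t y)) •
          (ρt t y • gradient (fun z => Real.log (ρt t z / ρ t z)) y)) x
      + vdiv (fun y => (ρt t y / ρ t y) •
          (ρ t y • gradient (fun z => ρt t z / ρ t z) y)) x
      - (1 + ρt t x / ρ t x)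
          * ‖gradient (fun y => Real.log (ρt t y / ρ t y)) x‖ ^ 2 * ρt t x := by
    intro x
    have e1 := heq₁ t htm x
    have e2' : vdiv (fun y => ρ t y • gradient (fun z => ρt t z / ρ t z) y) x
        = -deriv (fun s => ρ s x) t := by rw [heq₂ t htm x]; ring
    rw [vdiv_smul _ _ x (((hf.differentiable (by simp)) x).const_add 1)
        ((hw1.differentiable (by simp)) x),
      vdiv_smul _ _ x ((hg.differentiable (by simp)) x) ((hw2.differentiable (by simp)) x),
      gradient_one_add, ← e1, e2']
    have hgg : gradient (fun z => ρt t z / ρ t z) x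
        = (ρt t x / ρ t x) • gradient (fun y => Real.log (ρt t y / ρ t y)) x := by
      have := gradient_log_comp (fun z => ρt t z / ρ t z) x
        ((hg.differentiable (by simp)) x) (hgpos x).ne'
      rw [this, smul_smul, mul_inv_cancel₀ (hgpos x).ne', one_smul]
    rw [hgg, real_inner_smul_right, real_inner_smul_right, real_inner_smul_left,
      real_inner_smul_right, real_inner_self_eq_norm_sq]
    have hb := hBne x
    field_simp
    ring
  obtain ⟨hI1, hZ1⟩ := hbdry₁ t htm
  obtain ⟨hI2, hZ2⟩ := hbdry₂ t htm
  have hint : (∫ x, (deriv (fun s => ρt s x) t * (1 + Real.log (ρt t x / ρ t x))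
        - deriv (fun s => ρ s x) t * (ρt t x / ρ t x)))
      = -∫ x, (1 + ρt t x / ρ t x)
          * ‖gradient (fun y => Real.log (ρt t y / ρ t y)) x‖ ^ 2 * ρt t x := by
    rw [show (fun x => deriv (fun s => ρt s x) t * (1 + Real.log (ρt t x / ρ t x))
        - deriv (fun s => ρ s x) t * (ρt t x / ρ t x))
      = fun x => (vdiv (fun y => (1 + Real.log (ρt t y / ρ t y)) •
          (ρt t y • gradient (fun z => Real.log (ρt t z / ρ t z)) y)) x
        + vdiv (fun y => (ρt t y / ρ t y) •
          (ρ t y • gradient (fun z => ρt t z / ρ t z) y)) x)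
        - (1 + ρt t x / ρ t x)
          * ‖gradient (fun y => Real.log (ρt t y / ρ t y)) x‖ ^ 2 * ρt t x
      from funext key]
    have hI12 : Integrable (fun x =>
        vdiv (fun y => (1 + Real.log (ρt t y / ρ t y)) •
          (ρt t y • gradient (fun z => Real.log (ρt t z / ρ t z)) y)) x
        + vdiv (fun y => (ρt t y / ρ t y) •
          (ρ t y • gradient (fun z => ρt t z / ρ t z) y)) x) volume := hI1.add hI2
    by_cases hh : Integrable (fun x => (1 + ρt t x / ρ t x)
        * ‖gradient (fun y => Real.log (ρt t y / ρ t y)) x‖ ^ 2 * ρt t x) volume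
    · rw [integral_sub hI12 hh, integral_add hI1 hI2, hZ1, hZ2]; ring
    · rw [integral_undef hh, neg_zero, integral_undef]
      intro hcon
      exact hh ((hI12.sub hcon).congr (by
        filter_upwards with x; simp only [Pi.add_apply, Pi.sub_apply]; ring))
  refine ⟨?_, ?_⟩
  · have := hDUI t htm
    rwa [hint] at this
  · rw [neg_nonpos]
    refine integral_nonneg (fun x => ?_)
    have h1 := hρtpos t x
    have h2 := hgpos x
    have h3 := sq_nonneg ‖gradient (fun y => Real.log (ρt t y / ρ t y)) x‖
    show (0:ℝ) ≤ _
    exact mul_nonneg (mul_nonneg (by linarith) h3) h1.le
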